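/- (Conservation laws, equality under strong connectivity.) Let U be a linearly eliminable set such that every connected component of G_U is strongly connected. Then ζ(S^⊥) = S̃^⊥: for every ω̃ ∈ ℝ^p orthogonal to all reaction vectors of the reduced network, there exist α_1,…,α_m ∈ ℝ such that (ω̃, α) ∈ ℝ^{p+m} is orthogonal to all reaction vectors of the original network. -/

import Mathlib

/-- A multidigraph: a set of nodes `V`, a set of edges `E`, and source/target maps. -/
structure Multidigraph (V E : Type*) where
  src : E → V
  tgt : E → V

namespace Multidigraph

variable {V E : Type*}

/-- One-step edge relation using only the edges in `τ`. -/
def Rel (G : Multidigraph V E) (τ : Set E) (a b : V) : Prop :=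
  ∃ e ∈ τ, G.src e = a ∧ G.tgt e = b

/-- Undirected (symmetrized) one-step relation. -/
def URel (G : Multidigraph V E) (a b : V) : Prop :=
  G.Rel Set.univ a b ∨ G.Rel Set.univ b a

/-- Node set of the (weakly) connected component containing `v`. -/
def component (G : Multidigraph V E) (v : V) : Set V :=
  {w | Relation.ReflTransGen G.URel v w}

/-- `τ` is a spanning tree of the subgraph of `G` induced on the node set `W`,
rooted at `r`: all edges stay inside `W`, every non-root node of `W` has exactly
one outgoing edge in `τ`, the root has none, and every node of `W` reaches `r`
through `τ`. -/
def IsSpanningTreeOn (G : Multidigraph V E) (W : Set V) (τ : Finset E) (r : V) : Prop :=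
  (∀ e ∈ τ, G.src e ∈ W ∧ G.tgt e ∈ W) ∧
  (∀ v ∈ W, v ≠ r → ∃! e, e ∈ τ ∧ G.src e = v) ∧
  (∀ e ∈ τ, G.src e ≠ r) ∧
  (∀ v ∈ W, Relation.ReflTransGen (G.Rel (τ : Set E)) v r)

/-- Spanning tree of `G` rooted at `r`. -/
def IsSpanningTree (G : Multidigraph V E) (τ : Finset E) (r : V) : Prop :=
  G.IsSpanningTreeOn Set.univ τ r

/-- A cycle: a nonempty closed directed path with pairwise distinct nodes. -/
def IsCycle (G : Multidigraph V E) (l : List E) : Prop :=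
  l ≠ [] ∧ (l.map G.src).Nodup ∧
  l.Chain' (fun a b => G.tgt a = G.src b) ∧
  ∀ h : l ≠ [], G.tgt (l.getLast h) = G.src (l.head h)

def StronglyConnected (G : Multidigraph V E) : Prop :=
  ∀ a b : V, Relation.ReflTransGen (G.Rel Set.univ) a b

def Connected (G : Multidigraph V E) : Prop :=
  ∀ a b : V, Relation.ReflTransGen G.URel a b

/-- Incidence matrix of a multidigraph. -/
def incidence [DecidableEq V] (G : Multidigraph V E) : Matrix V E ℝ := fun v e =>
  if G.tgt e = v ∧ G.src e ≠ v then 1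
  else if G.src e = v ∧ G.tgt e ≠ v then (-1 : ℝ) else 0

inductive IsWalk (G : Multidigraph V E) : V → V → List E → Prop
  | nil (a : V) : G.IsWalk a a []
  | cons {a b : V} (e : E) {l : List E} (ha : G.src e = a)
      (h : G.IsWalk (G.tgt e) b l) : G.IsWalk a b (e :: l)

theorem IsWalk.append {G : Multidigraph V E} {a b c : V} {l l' : List E}
    (h : G.IsWalk a b l) (h' : G.IsWalk b c l') : G.IsWalk a c (l ++ l') := by
  induction h with
  | nil => simpa
  | cons e ha h2 ih => exact .cons e ha (ih h')

theorem IsWalk.split {G : Multidigraph V E} {a c : V} (l₁ : List E) {l₂ : List E}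
    (h : G.IsWalk a c (l₁ ++ l₂)) : ∃ b, G.IsWalk a b l₁ ∧ G.IsWalk b c l₂ := by
  induction l₁ generalizing a with
  | nil => exact ⟨a, .nil a, h⟩
  | cons e t ih =>
    cases h with
    | cons e ha h2 =>
      obtain ⟨b, hb1, hb2⟩ := ih h2
      exact ⟨b, .cons e ha hb1, hb2⟩

theorem IsWalk.of_reflTransGen {G : Multidigraph V E} {a b : V}
    (h : Relation.ReflTransGen (G.Rel Set.univ) a b) : ∃ l, G.IsWalk a b l := by
  induction h with
  | refl => exact ⟨[], .nil a⟩
  | tail _ hbc ih =>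
    obtain ⟨l, hl⟩ := ih
    obtain ⟨e, -, he1, he2⟩ := hbc
    exact ⟨l ++ [e], hl.append (.cons e he1 (he2 ▸ .nil _))⟩

theorem IsWalk.urel_reach {G : Multidigraph V E} {a b : V} {l : List E}
    (h : G.IsWalk a b l) : Relation.ReflTransGen G.URel a b := by
  induction h with
  | nil => exact .refl
  | cons e ha h2 ih => exact .head (Or.inl ⟨e, Set.mem_univ e, ha, rfl⟩) ih

theorem IsWalk.head_src {G : Multidigraph V E} {a b : V} {e : E} {l : List E}
    (h : G.IsWalk a b (e :: l)) : G.src e = a := by cases h; assumption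

theorem IsWalk.chain' {G : Multidigraph V E} {a b : V} {l : List E}
    (h : G.IsWalk a b l) : l.Chain' (fun x y => G.tgt x = G.src y) := by
  induction h with
  | nil => exact List.isChain_nil
  | cons e ha h2 ih =>
    rename_i l'
    rcases l' with _ | ⟨f, t⟩
    · exact List.isChain_singleton _
    · exact List.isChain_cons_cons.2 ⟨h2.head_src.symm, ih⟩

theorem IsWalk.last_tgt {G : Multidigraph V E} {a b : V} {l : List E}
    (h : G.IsWalk a b l) (hne : l ≠ []) : G.tgt (l.getLast hne) = b := by
  induction h with
  | nil => exact absurd rfl hne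
  | cons e ha h2 ih =>
    rename_i l'
    rcases l' with _ | ⟨f, t⟩
    · cases h2; simp
    · rw [List.getLast_cons (by simp)]
      exact ih (by simp)

theorem exists_dup_decomp {f : E → V} : ∀ {l : List E}, ¬ (l.map f).Nodup →
    ∃ l₁ e₁ l₂ e₂ l₃, l = l₁ ++ (e₁ :: (l₂ ++ e₂ :: l₃)) ∧ f e₁ = f e₂ := by
  intro l
  induction l with
  | nil => simp
  | cons e t ih =>
    intro h
    rw [List.map_cons, List.nodup_cons] at h
    push_neg at h
    by_cases hm : f e ∈ t.map f
    · obtain ⟨e₂, he₂, hfe⟩ := List.mem_map.mp hm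
      obtain ⟨s, u, rfl⟩ := List.append_of_mem he₂
      exact ⟨[], e, s, e₂, u, by simp, hfe.symm⟩
    · obtain ⟨l₁, e₁, l₂, e₂, l₃, rfl, hfe⟩ := ih (h hm)
      exact ⟨e :: l₁, e₁, l₂, e₂, l₃, by simp, hfe⟩

theorem closed_walk_sum_zero {G : Multidigraph V E} (w : E → ℝ)
    (hcyc : ∀ σ : List E, G.IsCycle σ → (σ.map w).sum = 0) :
    ∀ (n : ℕ) (l : List E), l.length = n → ∀ a, G.IsWalk a a l → (l.map w).sum = 0 := by
  classical
  intro n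
  induction n using Nat.strong_induction_on with
  | _ n ih =>
    intro l hlen a hw
    by_cases hnd : (l.map G.src).Nodup
    · rcases eq_or_ne l [] with rfl | hne
      · simp
      · refine hcyc l ⟨hne, hnd, hw.chain', fun h => ?_⟩
        rw [hw.last_tgt h]
        rcases l with _ | ⟨e, t⟩
        · exact absurd rfl hne
        · simp [hw.head_src]
    · obtain ⟨l₁, e₁, l₂, e₂, l₃, rfl, hfe⟩ := exists_dup_decomp hnd
      obtain ⟨x, hx1, hx2⟩ := hw.split l₁
      cases hx2 with
      | cons _ ha h2 =>
        obtain ⟨y, hy1, hy2⟩ := h2.split l₂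
        have hyeq : y = x := by rw [← hy2.head_src (e := e₂), ← hfe, ha]
        have hinner : G.IsWalk x x (e₁ :: l₂) := .cons e₁ ha (hyeq ▸ hy1)
        have houter : G.IsWalk a a (l₁ ++ (e₂ :: l₃)) := hx1.append (hyeq ▸ hy2)
        have s1 := ih (e₁ :: l₂).length (by subst hlen; simp; omega) _ rfl _ hinner
        have s2 := ih (l₁ ++ (e₂ :: l₃)).length (by subst hlen; simp) _ rfl _ houter
        simp only [List.map_append, List.map_cons, List.sum_append, List.sum_cons] at s1 s2 ⊢
        linarith

end Multidigraph

/-- The multidigraph `G_U`: nodes are the species of `U` together with `*`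
(modelled as `Option (Fin m)`, with `none` playing the role of `*`); edges are
the reactions involving some species of `U`. -/
def GU {m : ℕ} {R : Type} (fsrc ftgt : R → Option (Fin m)) :
    Multidigraph (Option (Fin m)) {r : R // fsrc r ≠ none ∨ ftgt r ≠ none} where
  src e := fsrc e.val
  tgt e := ftgt e.val

/-- Conservation laws, equality under strong connectivity: if
every connected component of `G_U` is strongly connected and `ω̃` is orthogonal
to all reaction vectors of the reduced network, then there exists `α` such
that `(ω̃, α)` is orthogonal to all reaction vectors of the original network. -/
theorem stmt11 {p m : ℕ} {R : Type} [Fintype R]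
    (y y' : R → (Fin p → ℝ) × (Fin m → ℝ))
    (fsrc ftgt : R → Option (Fin m))
    (hsrc : ∀ r, (y r).2 = (match fsrc r with | some j => Pi.single j 1 | none => 0))
    (htgt : ∀ r, (y' r).2 = (match ftgt r with | some j => Pi.single j 1 | none => 0))
    (hcomp : ∀ a b, Relation.ReflTransGen (GU fsrc ftgt).URel a b →
        Relation.ReflTransGen ((GU fsrc ftgt).Rel Set.univ) a b)
    (ω : Fin p → ℝ)
    (h1 : ∀ r : R, fsrc r = none → ftgt r = none →
        ∑ i, ω i * ((y' r).1 i - (y r).1 i) = 0)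
    (h2 : ∀ σ : List {r : R // fsrc r ≠ none ∨ ftgt r ≠ none},
        (GU fsrc ftgt).IsCycle σ →
        ∑ i, ω i * ((σ.map (fun e => (y' e.val).1 i - (y e.val).1 i)).sum) = 0) :
    ∃ α : Fin m → ℝ, ∀ r : R,
      (∑ i, ω i * ((y' r).1 i - (y r).1 i))
        + (∑ j, α j * ((y' r).2 j - (y r).2 j)) = 0 := by
  classical
  set G := GU fsrc ftgt with hG
  let w : {r : R // fsrc r ≠ none ∨ ftgt r ≠ none} → ℝ :=
    fun e => ∑ i, ω i * ((y' e.val).1 i - (y e.val).1 i)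
  have exch : ∀ σ : List {r : R // fsrc r ≠ none ∨ ftgt r ≠ none},
      (σ.map w).sum = ∑ i, ω i * ((σ.map (fun e => (y' e.val).1 i - (y e.val).1 i)).sum) := by
    intro σ
    induction σ with
    | nil => simp
    | cons e t ih =>
      simp only [List.map_cons, List.sum_cons, ih, mul_add, Finset.sum_add_distrib]
      rfl
  have hcyc : ∀ σ, G.IsCycle σ → (σ.map w).sum = 0 := by
    intro σ hσ
    rw [exch]
    exact h2 σ hσ
  have hclosed : ∀ (l) (a), G.IsWalk a a l → (l.map w).sum = 0 := fun l a h =>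
    Multidigraph.closed_walk_sum_zero w hcyc l.length l rfl a h
  have hsymm : Symmetric G.URel := fun x y h => h.symm
  have hwd : ∀ {a b : Option (Fin m)} {l l'}, G.IsWalk a b l → G.IsWalk a b l' →
      (l.map w).sum = (l'.map w).sum := by
    intro a b l l' h h'
    have hur : Relation.ReflTransGen G.URel b a :=
      ((@Relation.ReflTransGen.stdSymm _ G.URel ⟨hsymm⟩).symm _ _) h.urel_reach
    obtain ⟨lm, hlm⟩ := Multidigraph.IsWalk.of_reflTransGen (hcomp b a hur)
    have c1 := hclosed (l ++ lm) a (h.append hlm)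
    have c2 := hclosed (l' ++ lm) a (h'.append hlm)
    simp only [List.map_append, List.sum_append] at c1 c2
    linarith
  letI s : Setoid (Option (Fin m)) :=
    ⟨fun a b => Relation.ReflTransGen G.URel a b,
      ⟨fun _ => .refl, fun h => ((@Relation.ReflTransGen.stdSymm _ G.URel ⟨hsymm⟩).symm _ _) h,
        fun h h' => h.trans h'⟩⟩
  let rep : Option (Fin m) → Option (Fin m) := fun v => (Quotient.mk s v).out
  have hrep1 : ∀ v, Relation.ReflTransGen G.URel v (rep v) := fun v =>
    ((@Relation.ReflTransGen.stdSymm _ G.URel ⟨hsymm⟩).symm _ _) (Quotient.mk_out v)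
  have hrep2 : ∀ a b, Relation.ReflTransGen G.URel a b → rep a = rep b := by
    intro a b h
    show (Quotient.mk s a).out = (Quotient.mk s b).out
    rw [Quotient.sound h]
  have hex : ∀ v, ∃ l, G.IsWalk v (rep v) l := fun v =>
    Multidigraph.IsWalk.of_reflTransGen (hcomp _ _ (hrep1 v))
  let φ : Option (Fin m) → ℝ := fun v => ((Classical.choose (hex v)).map w).sum
  have hφ0 : ∀ e : {r : R // fsrc r ≠ none ∨ ftgt r ≠ none},
      φ (fsrc e.val) = w e + φ (ftgt e.val) := by
    intro e
    have ha := Classical.choose_spec (hex (G.src e))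
    have hb := Classical.choose_spec (hex (G.tgt e))
    have hst : Relation.ReflTransGen G.URel (G.src e) (G.tgt e) :=
      .single (Or.inl ⟨e, Set.mem_univ e, rfl, rfl⟩)
    have hrr : rep (G.src e) = rep (G.tgt e) := hrep2 _ _ hst
    have hw2 : G.IsWalk (G.src e) (rep (G.src e)) (e :: Classical.choose (hex (G.tgt e))) := by
      refine .cons e rfl ?_
      rw [hrr]
      exact hb
    have := hwd ha hw2
    show φ (G.src e) = w e + φ (G.tgt e)
    simpa [φ] using this
  have hφ : ∀ (r : R), (fsrc r ≠ none ∨ ftgt r ≠ none) →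
      φ (fsrc r) = (∑ i, ω i * ((y' r).1 i - (y r).1 i)) + φ (ftgt r) := by
    intro r h
    exact hφ0 ⟨r, h⟩
  refine ⟨fun j => φ (some j) - φ none, fun r => ?_⟩
  have hkey : ∀ c : Fin m, ∑ j, (φ (some j) - φ none) * (Pi.single c 1 : Fin m → ℝ) j
      = φ (some c) - φ none := by
    intro c
    rw [Finset.sum_eq_single c]
    · simp
    · intro b _ hbc
      simp [Pi.single_apply, hbc]
    · simp
  rcases hfs : fsrc r with _ | a <;> rcases hft : ftgt r with _ | b
  · have : ∀ j, (y' r).2 j - (y r).2 j = 0 := by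
      intro j
      rw [hsrc r, htgt r, hfs, hft]
      simp
    simp only [this, mul_zero, Finset.sum_const_zero, add_zero]
    exact h1 r hfs hft
  · have he := hφ r (Or.inr (by simp [hft]))
    rw [hfs, hft] at he
    have hsum : ∑ j, (φ (some j) - φ none) * ((y' r).2 j - (y r).2 j)
        = φ (some b) - φ none := by
      rw [htgt r, hft, hsrc r, hfs]
      simpa [mul_sub, Finset.sum_sub_distrib] using hkey b
    rw [hsum]
    linarith
  · have he := hφ r (Or.inl (by simp [hfs]))
    rw [hfs, hft] at he
    have hsum : ∑ j, (φ (some j) - φ none) * ((y' r).2 j - (y r).2 j)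
        = -(φ (some a) - φ none) := by
      rw [htgt r, hft, hsrc r, hfs]
      have := hkey a
      simp only [mul_sub, Finset.sum_sub_distrib]
      simp only [Pi.zero_apply, mul_zero, Finset.sum_const_zero]
      rw [this]
      ring
    rw [hsum]
    linarith
  · have he := hφ r (Or.inl (by simp [hfs]))
    rw [hfs, hft] at he
    have hsum : ∑ j, (φ (some j) - φ none) * ((y' r).2 j - (y r).2 j)
        = (φ (some b) - φ none) - (φ (some a) - φ none) := by
      rw [htgt r, hft, hsrc r, hfs]
      simp only [mul_sub, Finset.sum_sub_distrib]
      rw [hkey a, hkey b]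
    rw [hsum]
    linarith
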